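/- arXiv:2307.14867 — 2 statements merged into one kernel-verified Lean document; each statement's English description precedes it below -/
import Mathlib

section
/- Let X and Y be Hilbert spaces and T : X → Y a bounded linear operator. For every λ > 0, the operator norm of (T*T + λI)^{-1} T* is at most 1/(2√λ). -/
/-- For a bounded operator `T : X → Y` between Hilbert spaces and `λ > 0`,
the operator norm of `(T*T + λI)⁻¹ T*` is at most `1/(2√λ)`. The inverse is encoded as a
continuous linear equivalence `J` whose underlying map equals `T*T + λI`. -/
theorem stmt2 {X Y : Type*} [NormedAddCommGroup X] [InnerProductSpace ℝ X] [CompleteSpace X]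
    [NormedAddCommGroup Y] [InnerProductSpace ℝ Y] [CompleteSpace Y]
    (T : X →L[ℝ] Y) (lam : ℝ) (hlam : 0 < lam) (J : X ≃L[ℝ] X)
    (hJ : (J : X →L[ℝ] X) = (ContinuousLinearMap.adjoint T).comp T + lam • (1 : X →L[ℝ] X)) :
    ‖(J.symm : X →L[ℝ] X).comp (ContinuousLinearMap.adjoint T)‖ ≤ 1 / (2 * Real.sqrt lam) := by
  have hs : 0 < Real.sqrt lam := Real.sqrt_pos.mpr hlam
  apply ContinuousLinearMap.opNorm_le_bound _ (by positivity)
  intro y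
  set x := J.symm ((ContinuousLinearMap.adjoint T) y) with hx
  have h1 : (ContinuousLinearMap.adjoint T) (T x) + lam • x
      = (ContinuousLinearMap.adjoint T) y := by
    have h := J.apply_symm_apply ((ContinuousLinearMap.adjoint T) y)
    have h' : (J : X →L[ℝ] X) x = (ContinuousLinearMap.adjoint T) y := h
    rw [hJ] at h'
    simpa using h'
  have h2 : ‖T x‖ ^ 2 + lam * ‖x‖ ^ 2 = inner ℝ y (T x) := by
    have := congrArg (fun z => (inner ℝ z x : ℝ)) h1
    simpa [inner_add_left, inner_smul_left, ContinuousLinearMap.adjoint_inner_left,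
      real_inner_self_eq_norm_sq, mul_comm] using this
  have h3 : (inner ℝ y (T x) : ℝ) ≤ ‖y‖ * ‖T x‖ := real_inner_le_norm y (T x)
  have hxy : (2 * Real.sqrt lam * ‖x‖) ^ 2 ≤ ‖y‖ ^ 2 := by
    nlinarith [Real.sq_sqrt hlam.le, sq_nonneg (‖T x‖ - ‖y‖ / 2), norm_nonneg x,
      norm_nonneg y, norm_nonneg (T x)]
  have key : 2 * Real.sqrt lam * ‖x‖ ≤ ‖y‖ := by
    have := Real.sqrt_le_sqrt hxy
    rwa [Real.sqrt_sq (by positivity), Real.sqrt_sq (norm_nonneg y)] at this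
  have hgoal : ‖x‖ ≤ 1 / (2 * Real.sqrt lam) * ‖y‖ := by
    rw [one_div, ← div_eq_inv_mul, le_div_iff₀ (by positivity)]
    linarith
  simpa [hx] using hgoal
end

section
/- Let X, Y be Hilbert spaces, T : X → Y a compact injective linear operator, and for λ > 0 set R_λ := (T*T + λI)^{-1} T*T. Then for every h ∈ X, ‖R_λ h − h‖ → 0 as λ → 0⁺. -/
/-!
With `A = T* T`, the defect is `R_λ h - h = -λ (A + λ)⁻¹ h`. Positivity of `A` gives
`‖λ (A + λ)⁻¹‖ ≤ 1` for all `λ > 0`, and on the range of `A` the defect is `O(λ)`, since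
`λ (A + λ)⁻¹ A g = λ (g - λ (A + λ)⁻¹ g)`. Injectivity of `T` makes that range dense
(`(range A)ᗮ = ker A = ker T`), and a uniformly bounded family of operators that tends to `0`
on a dense set tends to `0` everywhere.
-/

open Filter Topology ContinuousLinearMap

theorem tendsto_apply_zero_of_dense {𝕜 E F ι : Type*} [NontriviallyNormedField 𝕜]
    [SeminormedAddCommGroup E] [NormedSpace 𝕜 E] [SeminormedAddCommGroup F] [NormedSpace 𝕜 F]
    {l : Filter ι} {S : ι → E →L[𝕜] F} {C : ℝ} (hS : ∀ᶠ i in l, ‖S i‖ ≤ C) {s : Set E}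
    (hs : Dense s) (h0 : ∀ x ∈ s, Tendsto (S · x) l (𝓝 0)) (x : E) :
    Tendsto (S · x) l (𝓝 0) := by
  set S' : {i // ‖S i‖ ≤ C} → E →L[𝕜] F := fun i ↦ S i
  have hl : map Subtype.val (comap Subtype.val l) = l :=
    map_comap_of_mem (by rwa [Subtype.range_coe_subtype])
  have hS' : Equicontinuous ((↑) ∘ S') :=
    ((NormedSpace.equicontinuous_TFAE S').out 5 1).mp (⟨C, fun i ↦ i.2⟩ : ∃ C, ∀ i, ‖S' i‖ ≤ C)
  have hclosed : IsClosed {y | Tendsto (S' · y) (comap Subtype.val l) (𝓝 0)} :=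
    hS'.isClosed_setOfPred_tendsto continuous_const
  have hsub : s ⊆ {y | Tendsto (S' · y) (comap Subtype.val l) (𝓝 0)} :=
    fun y hy ↦ (h0 y hy).comp tendsto_comap
  rw [← hl, tendsto_map'_iff]
  exact hclosed.closure_subset_iff.mpr hsub (hs.closure_eq ▸ Set.mem_univ x)

section Resolvent

variable {E : Type*} [NormedAddCommGroup E] [InnerProductSpace ℝ E]

theorem ContinuousLinearMap.IsPositive.mul_norm_le_norm_add_smul {A : E →L[ℝ] E}
    (hA : A.IsPositive) (lam : ℝ) (x : E) :
    lam * ‖x‖ ≤ ‖A x + lam • x‖ := by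
  rcases (norm_nonneg x).eq_or_lt with hx | hx
  · simp [← hx]
  refine le_of_mul_le_mul_right ?_ hx
  calc lam * ‖x‖ * ‖x‖ ≤ inner ℝ (A x) x + lam * ‖x‖ ^ 2 := by nlinarith [hA.inner_nonneg_left x]
    _ = inner ℝ (A x + lam • x) x := by
      rw [inner_add_left, real_inner_smul_left, real_inner_self_eq_norm_sq]
    _ ≤ ‖A x + lam • x‖ * ‖x‖ := real_inner_le_norm _ _

theorem ContinuousLinearMap.IsPositive.norm_smul_symm_le {A : E →L[ℝ] E} (hA : A.IsPositive)
    {lam : ℝ} (hlam : 0 ≤ lam) {J : E ≃L[ℝ] E} (hJ : (J : E →L[ℝ] E) = A + lam • 1) (y : E) :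
    ‖lam • J.symm y‖ ≤ ‖y‖ := by
  calc ‖lam • J.symm y‖ = lam * ‖J.symm y‖ := by rw [norm_smul, Real.norm_of_nonneg hlam]
    _ ≤ ‖A (J.symm y) + lam • J.symm y‖ := hA.mul_norm_le_norm_add_smul lam _
    _ = ‖J (J.symm y)‖ := by rw [← ContinuousLinearEquiv.coe_coe J, hJ]; simp
    _ = ‖y‖ := by rw [J.apply_symm_apply]

theorem ContinuousLinearEquiv.symm_apply_eq_sub_smul {A : E →L[ℝ] E} {lam : ℝ}
    (J : E ≃L[ℝ] E) (hJ : (J : E →L[ℝ] E) = A + lam • 1) (x : E) :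
    J.symm (A x) = x - lam • J.symm x := by
  have hA : A = (J : E →L[ℝ] E) - lam • 1 := by rw [hJ, add_sub_cancel_right]
  rw [hA, sub_apply, ContinuousLinearEquiv.coe_coe, map_sub, J.symm_apply_apply]
  simp

theorem ContinuousLinearMap.IsPositive.tendsto_smul_symm_nhds_zero {A : E →L[ℝ] E}
    (hA : A.IsPositive) (hdense : DenseRange A) {J : ℝ → E ≃L[ℝ] E}
    (hJ : ∀ lam ∈ Set.Ioi (0 : ℝ), (J lam : E →L[ℝ] E) = A + lam • 1) (x : E) :
    Tendsto (fun lam ↦ lam • (J lam).symm x) (𝓝[>] 0) (𝓝 0) := by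
  have hpos : ∀ᶠ lam in 𝓝[>] (0 : ℝ), 0 < lam := self_mem_nhdsWithin
  refine tendsto_apply_zero_of_dense (S := fun lam ↦ lam • ((J lam).symm : E →L[ℝ] E)) (C := 1)
    ?_ hdense ?_ x
  · filter_upwards [hpos] with lam hlam
    exact opNorm_le_bound _ zero_le_one fun y ↦ by
      simpa using hA.norm_smul_symm_le hlam.le (hJ lam hlam) y
  · rintro _ ⟨g, rfl⟩
    have hbound : ∀ᶠ lam in 𝓝[>] 0, ‖lam • (J lam).symm (A g)‖ ≤ lam * (2 * ‖g‖) := by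
      filter_upwards [hpos] with lam hlam
      rw [(J lam).symm_apply_eq_sub_smul (hJ lam hlam), norm_smul, Real.norm_of_nonneg hlam.le]
      gcongr
      calc ‖g - lam • (J lam).symm g‖ ≤ ‖g‖ + ‖lam • (J lam).symm g‖ := norm_sub_le _ _
        _ ≤ ‖g‖ + ‖g‖ := by gcongr; exact hA.norm_smul_symm_le hlam.le (hJ lam hlam) g
        _ = 2 * ‖g‖ := by ring
    refine squeeze_zero_norm' hbound (tendsto_nhdsWithin_of_tendsto_nhds ?_)
    simpa using (tendsto_id (x := 𝓝 (0 : ℝ))).mul_const (2 * ‖g‖)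

end Resolvent

theorem ContinuousLinearMap.denseRange_adjoint_comp_self {E F : Type*}
    [NormedAddCommGroup E] [InnerProductSpace ℝ E] [CompleteSpace E]
    [NormedAddCommGroup F] [InnerProductSpace ℝ F] [CompleteSpace F]
    {T : E →L[ℝ] F} (hT : Function.Injective T) :
    DenseRange (adjoint T ∘L T) := by
  have hker : (LinearMap.range (adjoint T ∘L T : E →ₗ[ℝ] E))ᗮ = ⊥ := by
    rw [(isPositive_adjoint_comp_self T).isSymmetric.orthogonal_range]
    exact LinearMap.ker_eq_bot.mpr ((adjoint_comp_self_injective_iff T).mpr hT)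
  exact Submodule.dense_iff_topologicalClosure_eq_top.mpr
    (Submodule.topologicalClosure_eq_top_iff.mpr hker)

theorem stmt4_general {X Y : Type*} [NormedAddCommGroup X] [InnerProductSpace ℝ X] [CompleteSpace X]
    [NormedAddCommGroup Y] [InnerProductSpace ℝ Y] [CompleteSpace Y]
    (T : X →L[ℝ] Y)
    (hinj : Function.Injective T)
    (J : ℝ → (X ≃L[ℝ] X))
    (hJ : ∀ lam ∈ Set.Ioi (0 : ℝ),
      ((J lam : X →L[ℝ] X)) =
        (ContinuousLinearMap.adjoint T).comp T + lam • (1 : X →L[ℝ] X)) :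
    ∀ h : X,
      Filter.Tendsto
        (fun lam : ℝ => ‖(J lam).symm (((ContinuousLinearMap.adjoint T).comp T) h) - h‖)
        (nhdsWithin 0 (Set.Ioi 0)) (nhds 0) := by
  intro h
  have hA := isPositive_adjoint_comp_self T
  refine (tendsto_norm_zero.comp
    (hA.tendsto_smul_symm_nhds_zero (denseRange_adjoint_comp_self hinj) hJ h)).congr' ?_
  filter_upwards [self_mem_nhdsWithin] with lam hlam
  rw [Function.comp_apply, (J lam).symm_apply_eq_sub_smul (hJ lam hlam), sub_sub_cancel_left,
    norm_neg]

/-- If `T : X → Y` is a compact injective operator between Hilbert spaces and,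
for `λ > 0`, `R_λ = (T*T + λI)⁻¹ T*T`, then for every `h`, `‖R_λ h − h‖ → 0` as `λ → 0⁺`.
The inverses are encoded by a family `J` of continuous linear equivalences. -/
theorem stmt4 {X Y : Type*} [NormedAddCommGroup X] [InnerProductSpace ℝ X] [CompleteSpace X]
    [NormedAddCommGroup Y] [InnerProductSpace ℝ Y] [CompleteSpace Y]
    (T : X →L[ℝ] Y) (hT : IsCompactOperator (T : X →L[ℝ] Y))
    (hinj : Function.Injective T)
    (J : ℝ → (X ≃L[ℝ] X))
    (hJ : ∀ lam ∈ Set.Ioi (0 : ℝ),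
      ((J lam : X →L[ℝ] X)) =
        (ContinuousLinearMap.adjoint T).comp T + lam • (1 : X →L[ℝ] X)) :
    ∀ h : X,
      Filter.Tendsto
        (fun lam : ℝ => ‖(J lam).symm (((ContinuousLinearMap.adjoint T).comp T) h) - h‖)
        (nhdsWithin 0 (Set.Ioi 0)) (nhds 0) :=
  stmt4_general T hinj J hJ
end
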